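/- arXiv:2109.05968 — 2 statements merged into one kernel-verified Lean document; each statement's English description precedes it below -/
import Mathlib

section
/- Let E, F be Banach spaces, (x_n) a normalized Schauder basis of E with basis constant C, and J : E → F a continuous linear map such that ‖J x_{n+k}‖_F ≤ 2^{-k}‖J x_n‖_F for all n, k. Then the operators P_n : E → F defined by P_n x = ∑_{k≥n} a_k J x_k for x = ∑ a_k x_k satisfy ‖P_n‖_{E→F} ≤ 4C‖J x_n‖_F, and hence ‖P_n‖ → 0 as n → ∞. -/
open Filter Topology

/-- `(x n)` expands `y` with coefficients `a`: the partial sums converge to `y`. -/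
def ExpandsAs {E : Type*} [NormedAddCommGroup E] [NormedSpace ℝ E]
    (x : ℕ → E) (a : ℕ → ℝ) (y : E) : Prop :=
  Tendsto (fun N => ∑ k ∈ Finset.range N, a k • x k) atTop (𝓝 y)

/-- If `(x n)` is a normalized Schauder basis of `E` with basis constant `C` and
`J : E →L F` satisfies the geometric decay `‖J x_{n+k}‖ ≤ 2⁻ᵏ‖J x_n‖`, then the tail
operators `P n : y = ∑ a_k x_k ↦ ∑_{k≥n} a_k J x_k` are bounded with
`‖P n‖ ≤ 4C‖J x_n‖`, hence `‖P n‖ → 0`. -/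
theorem stmt6 {E F : Type*} [NormedAddCommGroup E] [NormedSpace ℝ E] [CompleteSpace E]
    [NormedAddCommGroup F] [NormedSpace ℝ F] [CompleteSpace F]
    (x : ℕ → E) (C : ℝ)
    (hbasis : ∀ y : E, ∃! a : ℕ → ℝ, ExpandsAs x a y)
    (hnorm : ∀ n, ‖x n‖ = 1)
    (hC : ∀ (a : ℕ → ℝ) (y : E) (N : ℕ), ExpandsAs x a y →
      ‖∑ k ∈ Finset.range N, a k • x k‖ ≤ C * ‖y‖)
    (J : E →L[ℝ] F)
    (hdecay : ∀ n k : ℕ, ‖J (x (n + k))‖ ≤ (2 : ℝ)⁻¹ ^ k * ‖J (x n)‖) :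
    ∃ P : ℕ → E →L[ℝ] F,
      (∀ (n : ℕ) (a : ℕ → ℝ) (y : E), ExpandsAs x a y →
        Tendsto (fun M => ∑ k ∈ Finset.Ico n M, a k • J (x k)) atTop (𝓝 (P n y))) ∧
      (∀ n, ‖P n‖ ≤ 4 * C * ‖J (x n)‖) ∧
      Tendsto (fun n => ‖P n‖) atTop (𝓝 0) := by
  classical
  choose a ha hu using hbasis
  -- C ≥ 1
  have hC1 : (1:ℝ) ≤ C := by
    have hx0 : ExpandsAs x (fun k => if k = 0 then 1 else 0) (x 0) := by
      have hev : ∀ᶠ N in atTop,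
          x 0 = (∑ k ∈ Finset.range N, (if k = 0 then (1:ℝ) else 0) • x k) := by
        filter_upwards [eventually_ge_atTop 1] with N hN
        symm
        rw [Finset.sum_eq_single 0]
        · simp
        · intro b _ hb; simp [hb]
        · intro h; exact absurd (Finset.mem_range.2 hN) h
      exact Tendsto.congr' hev tendsto_const_nhds
    have := hC _ _ 1 hx0
    simpa [hnorm 0] using this
  have hC0 : (0:ℝ) ≤ C := le_trans zero_le_one hC1
  -- coefficient bound
  have hcoef : ∀ (b : ℕ → ℝ) (y : E), ExpandsAs x b y → ∀ k, |b k| ≤ 2 * C * ‖y‖ := by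
    intro b y hb k
    have h1 := hC b y (k + 1) hb
    have h2 := hC b y k hb
    have hsplit : b k • x k =
        (∑ j ∈ Finset.range (k + 1), b j • x j) - ∑ j ∈ Finset.range k, b j • x j := by
      rw [Finset.sum_range_succ]; abel
    have : |b k| = ‖b k • x k‖ := by
      rw [norm_smul, hnorm, mul_one, Real.norm_eq_abs]
    rw [this, hsplit]
    calc ‖_ - _‖ ≤ _ + _ := norm_sub_le _ _
      _ ≤ C * ‖y‖ + C * ‖y‖ := add_le_add h1 h2
      _ = 2 * C * ‖y‖ := by ring
  -- summability of the tail series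
  have hbound : ∀ n (b : ℕ → ℝ) (y : E), ExpandsAs x b y → ∀ j,
      ‖b (n + j) • J (x (n + j))‖ ≤ (2 * C * ‖y‖ * ‖J (x n)‖) * (2:ℝ)⁻¹ ^ j := by
    intro n b y hb j
    rw [norm_smul, Real.norm_eq_abs]
    calc |b (n + j)| * ‖J (x (n + j))‖
        ≤ (2 * C * ‖y‖) * ((2:ℝ)⁻¹ ^ j * ‖J (x n)‖) := by
          apply mul_le_mul (hcoef b y hb _) (hdecay n j) (norm_nonneg _)
          positivity
      _ = (2 * C * ‖y‖ * ‖J (x n)‖) * (2:ℝ)⁻¹ ^ j := by ring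
  have hgeo : Summable (fun j : ℕ => (2:ℝ)⁻¹ ^ j) :=
    summable_geometric_of_lt_one (by norm_num) (by norm_num)
  have hnsum : ∀ n (b : ℕ → ℝ) (y : E), ExpandsAs x b y →
      Summable (fun j => ‖b (n + j) • J (x (n + j))‖) := by
    intro n b y hb
    exact (hgeo.mul_left _).of_nonneg_of_le (fun _ => norm_nonneg _) (hbound n b y hb)
  have hsum : ∀ n (b : ℕ → ℝ) (y : E), ExpandsAs x b y →
      Summable (fun j => b (n + j) • J (x (n + j))) := by
    intro n b y hb
    exact (hnsum n b y hb).of_norm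
  -- the tail maps
  set T : ℕ → E → F := fun n y => ∑' j, a y (n + j) • J (x (n + j)) with hT
  have hTnorm : ∀ n y, ‖T n y‖ ≤ 4 * C * ‖J (x n)‖ * ‖y‖ := by
    intro n y
    have h1 : ‖T n y‖ ≤ ∑' j, ‖a y (n + j) • J (x (n + j))‖ :=
      norm_tsum_le_tsum_norm (hnsum n (a y) y (ha y))
    have h2 : (∑' j, ‖a y (n + j) • J (x (n + j))‖)
        ≤ ∑' j, (2 * C * ‖y‖ * ‖J (x n)‖) * (2:ℝ)⁻¹ ^ j :=
      Summable.tsum_le_tsum (hbound n (a y) y (ha y)) (hnsum n (a y) y (ha y))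
        (hgeo.mul_left _)
    have h3 : (∑' j, (2 * C * ‖y‖ * ‖J (x n)‖) * (2:ℝ)⁻¹ ^ j)
        = 4 * C * ‖J (x n)‖ * ‖y‖ := by
      rw [tsum_mul_left, tsum_geometric_of_lt_one (by norm_num) (by norm_num)]
      ring
    linarith
  -- linearity of coefficients
  have hadd : ∀ y z : E, a (y + z) = fun k => a y k + a z k := by
    intro y z
    refine ((hu (y + z)) _ ?_).symm
    have := (ha y).add (ha z)
    refine Tendsto.congr (fun N => ?_) this
    simp [add_smul, Finset.sum_add_distrib]
  have hsmul : ∀ (c : ℝ) (y : E), a (c • y) = fun k => c * a y k := by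
    intro c y
    refine ((hu (c • y)) _ ?_).symm
    have := (ha y).const_smul c
    refine Tendsto.congr (fun N => ?_) this
    simp [Finset.smul_sum, smul_smul]
  -- T is linear
  have hTadd : ∀ n (y z : E), T n (y + z) = T n y + T n z := by
    intro n y z
    have h1 := hsum n (a y) y (ha y)
    have h2 := hsum n (a z) z (ha z)
    simp only [hT, hadd y z]
    rw [← Summable.tsum_add h1 h2]
    congr 1; funext j; rw [add_smul]
  have hTsmul : ∀ n (c : ℝ) (y : E), T n (c • y) = c • T n y := by
    intro n c y
    have h1 := hsum n (a y) y (ha y)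
    simp only [hT, hsmul c y]
    rw [← (h1.hasSum.const_smul c).tsum_eq]
    congr 1; funext j; rw [smul_smul]
  -- package as continuous linear maps
  let Plin : ℕ → E →ₗ[ℝ] F := fun n =>
    { toFun := T n
      map_add' := hTadd n
      map_smul' := hTsmul n }
  let P : ℕ → E →L[ℝ] F := fun n =>
    LinearMap.mkContinuous (Plin n) (4 * C * ‖J (x n)‖) (hTnorm n)
  have hPnorm : ∀ n, ‖P n‖ ≤ 4 * C * ‖J (x n)‖ := fun n =>
    LinearMap.mkContinuous_norm_le _ (by positivity) _
  refine ⟨P, ?_, hPnorm, ?_⟩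
  · intro n b y hb
    have hba : b = a y := hu y b hb
    have hPy : P n y = ∑' j, b (n + j) • J (x (n + j)) := by
      show T n y = _
      rw [hba]
    rw [hPy]
    have hs := ((hsum n b y hb).hasSum).tendsto_sum_nat
    have htail : Tendsto (fun M => M - n) atTop atTop := tendsto_sub_atTop_nat n
    have := hs.comp htail
    refine Tendsto.congr (fun M => ?_) this
    simp only [Function.comp]
    rw [Finset.sum_Ico_eq_sum_range]
  · have hJ : Tendsto (fun n => ‖J (x n)‖) atTop (𝓝 0) := by
      have hb : ∀ n, ‖J (x n)‖ ≤ ‖J (x 0)‖ * (2:ℝ)⁻¹ ^ n := by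
        intro n
        have := hdecay 0 n
        simpa [mul_comm] using this
      have h0 : Tendsto (fun n => ‖J (x 0)‖ * (2:ℝ)⁻¹ ^ n) atTop (𝓝 0) := by
        have := tendsto_pow_atTop_nhds_zero_of_lt_one (by norm_num : (0:ℝ) ≤ 2⁻¹)
          (by norm_num : (2:ℝ)⁻¹ < 1)
        simpa using this.const_mul ‖J (x 0)‖
      exact squeeze_zero (fun n => norm_nonneg _) hb h0
    have h4 : Tendsto (fun n => 4 * C * ‖J (x n)‖) atTop (𝓝 0) := by
      simpa using hJ.const_mul (4 * C)
    exact squeeze_zero (fun n => norm_nonneg _) hPnorm h4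
end

section
/- Let E₀, E₁, F₀, F₁ be Banach spaces, T : E₀ + E₁ → F₀ + F₁ linear with T bounded from E₀ to F₀ and compact from E₁ to F₁. Define Y_i := T(E_i) with norm ‖y‖_{Y_i} = inf{‖x‖_{E_i} : Tx = y}. Then Y₀, Y₁ are Banach spaces, the map S : E_i → Y_i, Sx = Tx, is bounded for i = 0,1, the inclusion J : Y₁ → F₁ is compact, and T = J ∘ S. -/
/-!
Take `Y i := E i ⧸ ker T i` with its quotient norm: it is complete because `E i` is and the
kernel is closed, its norm is by definition the infimum of `‖e‖` over preimages, and `T i`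
descends to an injective bounded `J i`. Since the quotient map is open, `J i` maps some
neighbourhood of `0` into the relatively compact set that `T i` maps a neighbourhood of `0` into,
so compactness passes from `T₁` to `J₁`.
-/

attribute [local instance] ContinuousLinearMap.isClosed_ker

theorem QuotientAddGroup.norm_eq_sInf {M : Type*} [SeminormedAddCommGroup M] {S : AddSubgroup M}
    (x : M ⧸ S) : ‖x‖ = sInf {r : ℝ | ∃ m : M, (m : M ⧸ S) = x ∧ r = ‖m‖} := by
  refine (IsGLB.csInf_eq ⟨?_, fun b hb => not_lt.1 fun (hlt : ‖x‖ < b) => ?_⟩ ?_).symm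
  · rintro _ ⟨m, rfl, rfl⟩
    exact norm_mk_le_norm
  · obtain ⟨m, hm, hm_lt⟩ := norm_lt_iff.1 hlt
    exact (hb ⟨m, hm, rfl⟩).not_gt hm_lt
  · obtain ⟨m, rfl⟩ := mk_surjective x
    exact ⟨_, m, rfl, rfl⟩

theorem IsCompactOperator.of_comp_isOpenMap {M₁ M₂ M₃ : Type*} [TopologicalSpace M₁] [Zero M₁]
    [TopologicalSpace M₂] [Zero M₂] [TopologicalSpace M₃] {f : M₁ → M₂} {g : M₂ → M₃}
    (hf : IsOpenMap f) (hf₀ : f 0 = 0) (hgf : IsCompactOperator (g ∘ f)) :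
    IsCompactOperator g := by
  obtain ⟨K, hK, hpre⟩ := hgf
  exact ⟨K, hK,
    Filter.mem_of_superset (hf₀ ▸ hf.image_mem_nhds hpre) (Set.image_preimage_subset f _)⟩

namespace ContinuousLinearMap

variable {𝕜 E F : Type*} [NontriviallyNormedField 𝕜] [NormedAddCommGroup E] [NormedSpace 𝕜 E]
  [NormedAddCommGroup F] [NormedSpace 𝕜 F] (T : E →L[𝕜] F)

theorem injective_liftQL_ker : Function.Injective (T.ker.liftQL T le_rfl) := by
  rw [Submodule.coe_liftQL, ← LinearMap.ker_eq_bot]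
  exact Submodule.ker_liftQ_eq_bot _ _ _ le_rfl

theorem isCompactOperator_liftQL_ker (hT : IsCompactOperator T) :
    IsCompactOperator (T.ker.liftQL T le_rfl) :=
  hT.of_comp_isOpenMap T.ker.isOpenQuotientMap_mkQL.isOpenMap (map_zero _)

end ContinuousLinearMap

theorem stmt15_general {E₀ E₁ F₀ F₁ : Type}
    [NormedAddCommGroup E₀] [NormedSpace ℝ E₀] [CompleteSpace E₀]
    [NormedAddCommGroup E₁] [NormedSpace ℝ E₁] [CompleteSpace E₁]
    [NormedAddCommGroup F₀] [NormedSpace ℝ F₀]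
    [NormedAddCommGroup F₁] [NormedSpace ℝ F₁]
    (T₀ : E₀ →L[ℝ] F₀) (T₁ : E₁ →L[ℝ] F₁) (hT₁ : IsCompactOperator (⇑T₁)) :
    ∃ (Y₀ Y₁ : Type) (_ : NormedAddCommGroup Y₀) (_ : NormedSpace ℝ Y₀)
      (_ : NormedAddCommGroup Y₁) (_ : NormedSpace ℝ Y₁),
      CompleteSpace Y₀ ∧ CompleteSpace Y₁ ∧
      ∃ (S₀ : E₀ →L[ℝ] Y₀) (S₁ : E₁ →L[ℝ] Y₁) (J₀ : Y₀ →L[ℝ] F₀) (J₁ : Y₁ →L[ℝ] F₁),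
        Function.Surjective S₀ ∧ Function.Surjective S₁ ∧
        Function.Injective J₀ ∧ Function.Injective J₁ ∧
        (∀ e : E₀, J₀ (S₀ e) = T₀ e) ∧ (∀ e : E₁, J₁ (S₁ e) = T₁ e) ∧
        (∀ y : Y₀, ‖y‖ = sInf {r : ℝ | ∃ e : E₀, S₀ e = y ∧ r = ‖e‖}) ∧
        (∀ y : Y₁, ‖y‖ = sInf {r : ℝ | ∃ e : E₁, S₁ e = y ∧ r = ‖e‖}) ∧
        IsCompactOperator (⇑J₁) :=
  ⟨E₀ ⧸ T₀.ker, E₁ ⧸ T₁.ker, inferInstance, inferInstance, inferInstance, inferInstance,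
    inferInstance, inferInstance, T₀.ker.mkQL, T₁.ker.mkQL, T₀.ker.liftQL T₀ le_rfl,
    T₁.ker.liftQL T₁ le_rfl, Submodule.mkQ_surjective _, Submodule.mkQ_surjective _,
    T₀.injective_liftQL_ker, T₁.injective_liftQL_ker, fun _ => rfl, fun _ => rfl,
    QuotientAddGroup.norm_eq_sInf, QuotientAddGroup.norm_eq_sInf,
    T₁.isCompactOperator_liftQL_ker hT₁⟩

/-- Factorization of an operator that is bounded from `E₀` to `F₀` and compact from
`E₁` to `F₁` through its images `Y i` equipped with the quotient (range) norms: the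
`Y i` are Banach spaces, `S i : E i → Y i` is bounded and surjective, the inclusion
`J i : Y i → F i` is injective with `T = J ∘ S`, the `Y i`-norm is the infimum norm over
preimages, and `J₁ : Y₁ → F₁` is compact. -/
theorem stmt15 {E₀ E₁ F₀ F₁ : Type}
    [NormedAddCommGroup E₀] [NormedSpace ℝ E₀] [CompleteSpace E₀]
    [NormedAddCommGroup E₁] [NormedSpace ℝ E₁] [CompleteSpace E₁]
    [NormedAddCommGroup F₀] [NormedSpace ℝ F₀] [CompleteSpace F₀]
    [NormedAddCommGroup F₁] [NormedSpace ℝ F₁] [CompleteSpace F₁]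
    (T₀ : E₀ →L[ℝ] F₀) (T₁ : E₁ →L[ℝ] F₁) (hT₁ : IsCompactOperator (⇑T₁)) :
    ∃ (Y₀ Y₁ : Type) (_ : NormedAddCommGroup Y₀) (_ : NormedSpace ℝ Y₀)
      (_ : NormedAddCommGroup Y₁) (_ : NormedSpace ℝ Y₁),
      CompleteSpace Y₀ ∧ CompleteSpace Y₁ ∧
      ∃ (S₀ : E₀ →L[ℝ] Y₀) (S₁ : E₁ →L[ℝ] Y₁) (J₀ : Y₀ →L[ℝ] F₀) (J₁ : Y₁ →L[ℝ] F₁),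
        Function.Surjective S₀ ∧ Function.Surjective S₁ ∧
        Function.Injective J₀ ∧ Function.Injective J₁ ∧
        (∀ e : E₀, J₀ (S₀ e) = T₀ e) ∧ (∀ e : E₁, J₁ (S₁ e) = T₁ e) ∧
        (∀ y : Y₀, ‖y‖ = sInf {r : ℝ | ∃ e : E₀, S₀ e = y ∧ r = ‖e‖}) ∧
        (∀ y : Y₁, ‖y‖ = sInf {r : ℝ | ∃ e : E₁, S₁ e = y ∧ r = ‖e‖}) ∧
        IsCompactOperator (⇑J₁) :=
  stmt15_general T₀ T₁ hT₁
end
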